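/- arXiv:1707.05148 — 3 statements merged into one kernel-verified Lean document; each statement's English description precedes it below -/
import Mathlib

section
/- Let G be a connected simple graph of order n ≥ 3. Then the modular edge-gracefulness satisfies k(G) = n if n ≢ 2 (mod 4), and k(G) = n + 1 if n ≡ 2 (mod 4). -/
/-- The weighted degree of a vertex `v` under an edge labeling `f` with values in an
additive Abelian group: the sum of the labels of all edges incident to `v`. -/
noncomputable def SimpleGraph.wdeg {V : Type} [Fintype V] (G : SimpleGraph V)
    {A : Type} [AddCommGroup A] (f : Sym2 V → A) (v : V) : A :=
  ∑ u ∈ (G.neighborSet v).toFinite.toFinset, f s(v, u)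

/-- An edge labeling `f` with values in an Abelian group `A` is `A`-irregular if the
weighted degrees of all vertices are pairwise distinct. -/
def SimpleGraph.IsIrregular {V : Type} [Fintype V] (G : SimpleGraph V)
    {A : Type} [AddCommGroup A] (f : Sym2 V → A) : Prop :=
  Function.Injective (G.wdeg f)

/-- The group irregularity strength `s_g(G)`: the smallest integer `s` such that for
every Abelian group of order `s` there exists a `𝒢`-irregular labeling of `G`. -/
noncomputable def SimpleGraph.groupIrregularityStrength {V : Type} [Fintype V]
    (G : SimpleGraph V) : ℕ :=
  sInf {s : ℕ | ∀ (A : Type) [AddCommGroup A] [Fintype A],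
    Fintype.card A = s → ∃ f : Sym2 V → A, G.IsIrregular f}

/-- The modular edge-gracefulness `k(G)`: the smallest integer `k ≥ |V(G)|` such that
there exists a `ℤ_k`-irregular labeling of `G`. -/
noncomputable def SimpleGraph.modularEdgeGracefulness {V : Type} [Fintype V]
    (G : SimpleGraph V) : ℕ :=
  sInf {k : ℕ | Fintype.card V ≤ k ∧ ∃ f : Sym2 V → ZMod k, G.IsIrregular f}

/-- `(X, Y)` is a bipartition of the connected component `c` of `G`: the two classes
partition the vertex set of `c` and every edge of the component joins `X` and `Y`. -/
def SimpleGraph.IsComponentBipartition {V : Type} (G : SimpleGraph V)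
    (c : G.ConnectedComponent) (X Y : Set V) : Prop :=
  X ∪ Y = c.supp ∧ Disjoint X Y ∧
    ∀ u v : V, u ∈ c.supp → v ∈ c.supp → G.Adj u v →
      ((u ∈ X ∧ v ∈ Y) ∨ (u ∈ Y ∧ v ∈ X))

/-!
A vertex weighting is *realizable* if it is the weighted-degree function of an edge labeling;
realizable weightings form a subgroup. A walk of length `ℓ` from `u` to `v` realizes
`a • [u] - (-1)^ℓ • a • [v]`, so in a connected graph every weighting `w` becomes realizable after
one correction at a root `r`. If `G` has an odd closed walk, all walks to `r` can be taken even
and `w` is realizable as soon as `∑ w` is even; if `G` is bipartite, as soon as the two colour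
classes carry the same total. Conversely the total weighted degree is always even (handshake).

For `k = n` with `n ≢ 2 (mod 4)` and for `k = n + 1` the sum `0 + 1 + ⋯ + (n - 1)` is even in
`ℤ_k`, so the values `0, …, n - 1` serve in the non-bipartite case. In the bipartite case one
class gets `0, …, p - 1`, the other `p, …, n - 1`, and the difference `2d` of the class sums is
removed by swapping two values that differ by `d`, or, if `d = n` in `ℤ_{n+1}`, by replacing `1`
with the spare value `n`. For `k = n ≡ 2 (mod 4)` an irregular labeling would make the weighted
degrees a permutation of `ℤ_n`, whose sum `n(n-1)/2` is odd.
-/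

open Finset

theorem ZMod.even_of_odd {k : ℕ} (hk : Odd k) (x : ZMod k) : Even x := by
  have h2 : (2 : ZMod k) * 2⁻¹ = 1 := by
    exact_mod_cast ZMod.coe_mul_inv_eq_one 2 (Nat.coprime_two_left.2 hk)
  exact ⟨x * 2⁻¹, by linear_combination -x * h2⟩

theorem ZMod.even_of_even_natCast {k m : ℕ} (hk : 2 ∣ k) (h : Even (m : ZMod k)) : Even m := by
  obtain ⟨r, hr⟩ := h.map (ZMod.castHom hk (ZMod 2))
  rw [map_natCast] at hr
  rw [← ZMod.natCast_eq_zero_iff_even, hr, CharTwo.add_self_eq_zero]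

theorem ZMod.sum_univ_eq_natCast_sum_range (n : ℕ) [NeZero n] :
    ∑ x : ZMod n, x = ((∑ i ∈ range n, i : ℕ) : ZMod n) := by
  rw [Nat.cast_sum]
  exact sum_nbij' ZMod.val Nat.cast (fun x _ => mem_range.2 x.val_lt) (fun _ _ => mem_univ _)
    (fun x _ => ZMod.natCast_zmod_val x) (fun i hi => ZMod.val_cast_of_lt (mem_range.1 hi))
    (fun x _ => (ZMod.natCast_zmod_val x).symm)

theorem Finset.even_sum_range_id_of_four_dvd {n : ℕ} (h : 4 ∣ n) :
    Even (∑ i ∈ range n, i) := by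
  obtain ⟨j, rfl⟩ := h
  have hsum := sum_range_id_mul_two (4 * j)
  generalize 4 * j - 1 = m at hsum
  exact ⟨j * m, by linarith⟩

theorem Finset.odd_sum_range_id_of_mod_four_eq_two {n : ℕ} (h : n % 4 = 2) :
    Odd (∑ i ∈ range n, i) := by
  obtain ⟨j, rfl⟩ : ∃ j, n = 4 * j + 2 := ⟨n / 4, by omega⟩
  have hsum := sum_range_id_mul_two (4 * j + 2)
  rw [show 4 * j + 2 - 1 = 4 * j + 1 by omega] at hsum
  exact ⟨4 * j * j + 3 * j, by linarith⟩

theorem Finset.sum_comp_swap_of_mem_of_notMem {ι M : Type*} [DecidableEq ι] [AddCommGroup M]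
    (f : ι → M) {s : Finset ι} {a b : ι} (ha : a ∈ s) (hb : b ∉ s) :
    ∑ i ∈ s, f (Equiv.swap a b i) = ∑ i ∈ s, f i - f a + f b := by
  have hfix : ∀ i ∈ s.erase a, f (Equiv.swap a b i) = f i := fun i hi =>
    congrArg f (Equiv.swap_apply_of_ne_of_ne (ne_of_mem_erase hi)
      (ne_of_mem_of_not_mem (mem_of_mem_erase hi) hb))
  rw [← add_sum_erase s _ ha, ← add_sum_erase s _ ha, sum_congr rfl hfix, Equiv.swap_apply_left]
  abel

theorem ZMod.injOn_natCast_comp_swap {k n a b : ℕ} (hnk : n ≤ k) (ha : a < k) (hb : b < k) :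
    Set.InjOn (fun i => (Equiv.swap a b i : ZMod k)) (Set.Iio n) := by
  refine (CharP.natCast_injOn_Iio (ZMod k) k).comp (Equiv.injective _).injOn fun i hi => ?_
  simp only [Set.mem_Iio] at hi ⊢
  rw [Equiv.swap_apply_def]
  split_ifs <;> omega

theorem ZMod.exists_injOn_sum_range_eq_sum_Ico {k n p : ℕ} (hnk : n ≤ k) (hkn : k ≤ n + 1)
    (hp : 2 ≤ p) (hpn : p < n) (hS : Even ((∑ i ∈ range n, i : ℕ) : ZMod k)) :
    ∃ t : ℕ → ZMod k, Set.InjOn t (Set.Iio n) ∧ ∑ i ∈ range p, t i = ∑ i ∈ Ico p n, t i := by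
  have : NeZero k := ⟨by omega⟩
  obtain ⟨d, hd⟩ : Even (∑ i ∈ Ico p n, (i : ZMod k) - ∑ i ∈ range p, (i : ZMod k)) := by
    have h := hS.sub (Even.add_self (∑ i ∈ range p, (i : ZMod k)))
    rwa [← sum_range_add_sum_Ico _ hpn.le, Nat.cast_add, Nat.cast_sum, Nat.cast_sum,
      add_sub_add_left_eq_sub] at h
  rw [← ZMod.natCast_zmod_val d] at hd
  have hval := ZMod.val_lt d
  rcases (show d.val = 0 ∨ (0 < d.val ∧ d.val < n) ∨ d.val = n by omega)
    with h0 | ⟨hd0, hdn⟩ | hdn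
  · refine ⟨Nat.cast, (CharP.natCast_injOn_Iio (ZMod k) k).mono (Set.Iio_subset_Iio hnk), ?_⟩
    rw [h0, Nat.cast_zero, add_zero, sub_eq_zero] at hd
    exact hd.symm
  · -- swapping `a` and `b = a + d` lowers the difference of the two sums by `2 d`
    set a := p - d.val
    set b := p - d.val + d.val
    refine ⟨fun i => (Equiv.swap a b i : ZMod k),
      ZMod.injOn_natCast_comp_swap hnk (by omega) (by omega), ?_⟩
    beta_reduce
    rw [sum_comp_swap_of_mem_of_notMem Nat.cast (by simp; omega) (by simp; omega), Equiv.swap_comm,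
      sum_comp_swap_of_mem_of_notMem Nat.cast (by simp; omega) (by simp; omega)]
    simp only [b, Nat.cast_add]
    linear_combination -hd
  · -- here `k = n + 1`, and the unused value `n = -1` replaces `1`
    have hk : k = n + 1 := by omega
    have hn : (n : ZMod k) = -1 := by
      have h : ((n + 1 : ℕ) : ZMod k) = 0 := hk ▸ ZMod.natCast_self k
      push_cast at h
      linear_combination h
    refine ⟨fun i => (Equiv.swap 1 n i : ZMod k),
      ZMod.injOn_natCast_comp_swap hnk (by omega) (by omega), ?_⟩
    beta_reduce
    rw [sum_comp_swap_of_mem_of_notMem Nat.cast (by simp; omega) (by simp; omega),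
      sum_congr rfl fun i hi => congrArg Nat.cast
        (Equiv.swap_apply_of_ne_of_ne (by simp at hi; omega) (by simp at hi; omega))]
    rw [hdn, hn] at hd
    rw [hn]
    linear_combination -hd

theorem Finset.exists_equivFin_mem_iff_lt {V : Type*} [Fintype V] [DecidableEq V]
    (s : Finset V) : ∃ e : V ≃ Fin (Fintype.card V), ∀ v, v ∈ s ↔ (e v : ℕ) < #s := by
  have hcompl : Fintype.card {v // v ∉ s} = Fintype.card V - #s := by
    rw [Fintype.card_subtype_compl, Fintype.card_coe]
  let e₁ : s ≃ Fin #s := Fintype.equivFinOfCardEq (Fintype.card_coe s)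
  let e₂ : {v // v ∉ s} ≃ Fin (Fintype.card V - #s) := Fintype.equivFinOfCardEq hcompl
  refine ⟨(Equiv.sumCompl (· ∈ s)).symm.trans ((e₁.sumCongr e₂).trans
    (finSumFinEquiv.trans (finCongr (Nat.add_sub_cancel' s.card_le_univ)))), fun v => ?_⟩
  by_cases hv : v ∈ s
  · simp [Equiv.sumCompl_symm_apply_of_pos hv, hv]
  · simp [Equiv.sumCompl_symm_apply_of_neg hv, hv]

theorem Finset.exists_injective_sum_eq_sum_compl {V : Type*} [Fintype V] [DecidableEq V] {k : ℕ}
    (h3 : 3 ≤ Fintype.card V) (hnk : Fintype.card V ≤ k) (hkn : k ≤ Fintype.card V + 1)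
    (hS : Even ((∑ i ∈ range (Fintype.card V), i : ℕ) : ZMod k)) {s : Finset V}
    (hs : s.Nonempty) (hsc : sᶜ.Nonempty) :
    ∃ w : V → ZMod k, Function.Injective w ∧ ∑ v ∈ s, w v = ∑ v ∈ sᶜ, w v := by
  wlog h2 : 2 ≤ #s generalizing s
  · obtain ⟨w, hw, hsum⟩ := this hsc (by rwa [compl_compl]) (by
      rw [card_compl]; have := hs.card_pos; omega)
    exact ⟨w, hw, by rw [hsum, compl_compl]⟩
  obtain ⟨e, he⟩ := s.exists_equivFin_mem_iff_lt
  obtain ⟨t, ht, hsum⟩ := ZMod.exists_injOn_sum_range_eq_sum_Ico hnk hkn h2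
    (by have := hsc.card_pos; rw [card_compl] at this; omega) hS
  have hreindex : ∀ (u : Finset V) (I : Finset ℕ), (∀ v, v ∈ u ↔ (e v : ℕ) ∈ I) →
      (∀ i ∈ I, i < Fintype.card V) → ∑ v ∈ u, t (e v) = ∑ i ∈ I, t i := by
    intro u I hu hI
    refine sum_nbij (fun v => (e v : ℕ)) (fun v hv => (hu v).1 hv)
      (fun u _ v _ h => e.injective (Fin.ext h)) (fun i hi => ?_) (fun _ _ => rfl)
    exact ⟨e.symm ⟨i, hI i hi⟩, (hu _).2 (by simpa using hi), by simp⟩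
  refine ⟨fun v => t (e v), fun u v h => e.injective (Fin.ext (ht (e u).isLt (e v).isLt h)), ?_⟩
  rw [hreindex s (range #s) (by simpa using he)
      fun i hi => (mem_range.1 hi).trans_le s.card_le_univ,
    hreindex sᶜ (Ico #s (Fintype.card V)) (fun v => by simp [he v, (e v).isLt]) (by simp), hsum]

namespace SimpleGraph

theorem Connected.exists_walk_even_length_of_odd_loop {V : Type*} {G : SimpleGraph V}
    (hG : G.Connected) {u : V} (c : G.Walk u u) (hc : Odd c.length) (v r : V) :
    ∃ p : G.Walk v r, Even p.length := by
  obtain ⟨q₁⟩ := hG.preconnected v u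
  obtain ⟨q₂⟩ := hG.preconnected u r
  by_cases h : Even (q₁.append q₂).length
  · exact ⟨_, h⟩
  · refine ⟨q₁.append (c.append q₂), ?_⟩
    rw [Nat.not_even_iff_odd, Walk.length_append] at h
    rw [Walk.length_append, Walk.length_append, add_left_comm]
    exact hc.add_odd h

variable {V : Type} [Fintype V] (G : SimpleGraph V) {A : Type} [AddCommGroup A]

theorem wdeg_eq_sum_incidenceFinset [DecidableEq V] [DecidableRel G.Adj] (f : Sym2 V → A)
    (v : V) : G.wdeg f v = ∑ e ∈ G.incidenceFinset v, f e := by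
  rw [wdeg, Set.toFinite_toFinset]
  refine sum_bij (fun u _ => s(v, u)) (fun u hu => ?_) (fun u _ u' _ h => Sym2.congr_right.1 h)
    (fun e he => ?_) (fun _ _ => rfl)
  · simpa [mem_incidence_iff_neighbor] using hu
  · rw [mem_incidenceFinset] at he
    obtain ⟨u, rfl⟩ := Sym2.mem_iff_exists.1 he.2
    exact ⟨u, by simpa [mem_incidence_iff_neighbor] using he, rfl⟩

theorem sum_wdeg [DecidableEq V] [DecidableRel G.Adj] (f : Sym2 V → A) :
    ∑ v, G.wdeg f v = ∑ e ∈ G.edgeFinset, 2 • f e := by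
  simp_rw [G.wdeg_eq_sum_incidenceFinset, incidenceFinset_eq_filter, sum_filter]
  rw [sum_comm]
  refine sum_congr rfl fun e he => ?_
  rw [← sum_filter, sum_const, ← Sym2.card_toFinset_of_not_isDiag e
    (G.not_isDiag_of_mem_edgeSet (mem_edgeFinset.1 he))]
  congr 2
  ext
  simp

theorem even_sum_wdeg (f : Sym2 V → A) : Even (∑ v, G.wdeg f v) := by
  classical
  rw [G.sum_wdeg]
  exact Finset.even_sum _ fun e _ => ⟨f e, two_nsmul _⟩

theorem wdeg_single_of_adj [DecidableEq V] {x y : V} (h : G.Adj x y) (a : A) :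
    G.wdeg (Pi.single s(x, y) a) = Pi.single x a + Pi.single y a := by
  classical
  ext v
  rw [G.wdeg_eq_sum_incidenceFinset, sum_pi_single']
  simp only [mem_incidenceFinset, mk'_mem_incidenceSet_iff]
  rcases eq_or_ne v x with rfl | hx
  · simp [h, h.ne]
  · rcases eq_or_ne v y with rfl | hy
    · simp [h, hx]
    · simp [hx, hy]

noncomputable def wdegHom : (Sym2 V → A) →+ (V → A) where
  toFun := G.wdeg
  map_zero' := by ext; simp [wdeg]
  map_add' _ _ := by ext; simp [wdeg, sum_add_distrib]

variable {G}

section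

variable [DecidableEq V]

theorem Walk.single_sub_neg_one_pow_smul_single_mem_range {u v : V} (p : G.Walk u v) (a : A) :
    (Pi.single u a - (-1 : ℤ) ^ p.length • Pi.single v a : V → A) ∈ G.wdegHom.range := by
  induction p with
  | nil => simp
  | @cons u x v h p ih =>
    have hedge : (Pi.single u a + Pi.single x a : V → A) ∈ G.wdegHom.range :=
      ⟨Pi.single s(u, x) a, G.wdeg_single_of_adj h a⟩
    convert sub_mem hedge ih using 1
    rw [Walk.length_cons, pow_succ, mul_neg_one, neg_smul]
    abel

theorem sub_single_sum_mem_range_wdegHom (r : V) (p : ∀ v, G.Walk v r) (w : V → A) :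
    w - Pi.single r (∑ v, (-1 : ℤ) ^ (p v).length • w v) ∈ G.wdegHom.range := by
  have h := sum_mem fun v (_ : v ∈ univ) =>
    (p v).single_sub_neg_one_pow_smul_single_mem_range (w v)
  convert h using 1
  simp_rw [sum_sub_distrib, univ_sum_single, ← Pi.single_smul]
  exact congrArg (w - ·) (map_sum (AddMonoidHom.single _ r) _ _)

theorem Connected.mem_range_wdegHom_of_odd_loop (hG : G.Connected) {u : V} (c : G.Walk u u)
    (hc : Odd c.length) {w : V → A} (hw : Even (∑ v, w v)) : w ∈ G.wdegHom.range := by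
  obtain ⟨a, ha⟩ := hw
  choose p hp using fun v => hG.exists_walk_even_length_of_odd_loop c hc v u
  have hloop := c.single_sub_neg_one_pow_smul_single_mem_range a
  rw [hc.neg_one_pow, neg_one_smul, sub_neg_eq_add, ← Pi.single_add, ← ha] at hloop
  convert add_mem (sub_single_sum_mem_range_wdegHom u p w) hloop using 1
  simp [(hp _).neg_one_pow]

theorem Connected.mem_range_wdegHom_of_coloring (hG : G.Connected) (C : G.Coloring Bool)
    {w : V → A} (hw : ∑ v with C v, w v = ∑ v with ¬ C v, w v) : w ∈ G.wdegHom.range := by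
  obtain ⟨r⟩ := hG.nonempty
  let p v := (hG.preconnected v r).some
  have hsign : ∀ v, (-1 : ℤ) ^ (p v).length • w v =
      (if C r then 1 else -1 : ℤ) • (if C v then w v else -w v) := by
    intro v
    have hpar := C.even_length_iff_congr (p v)
    rcases Nat.even_or_odd (p v).length with h | h
    · rw [h.neg_one_pow]
      cases hr : C r <;> cases hv : C v <;> simp_all
    · rw [h.neg_one_pow]
      cases hr : C r <;> cases hv : C v <;> simp_all [← Nat.not_even_iff_odd]
  have hzero : ∑ v, (-1 : ℤ) ^ (p v).length • w v = 0 := by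
    rw [sum_congr rfl fun v _ => hsign v, ← smul_sum, sum_ite, sum_neg_distrib, hw,
      add_neg_cancel, smul_zero]
  simpa [hzero] using sub_single_sum_mem_range_wdegHom r p w

end

theorem Connected.exists_isIrregular (hG : G.Connected) (h3 : 3 ≤ Fintype.card V) {k : ℕ}
    (hnk : Fintype.card V ≤ k) (hkn : k ≤ Fintype.card V + 1)
    (hS : Even ((∑ i ∈ range (Fintype.card V), i : ℕ) : ZMod k)) :
    ∃ f : Sym2 V → ZMod k, G.IsIrregular f := by
  classical
  suffices ∃ w : V → ZMod k, Function.Injective w ∧ w ∈ G.wdegHom.range by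
    obtain ⟨w, hw, f, rfl⟩ := this
    exact ⟨f, hw⟩
  by_cases hC : G.Colorable 2
  · let C : G.Coloring Bool := G.recolorOfEquiv finTwoEquiv hC.some
    have : Nontrivial V := Fintype.one_lt_card_iff_nontrivial.1 (by omega)
    obtain ⟨x, y, hxy⟩ : ∃ x y, G.Adj x y :=
      ⟨_, hG.preconnected.exists_adj_of_nontrivial hG.nonempty.some⟩
    have hne : C x ≠ C y := C.valid hxy
    obtain ⟨a, b, ha, hb⟩ : ∃ a b, C a = true ∧ C b = false := by
      cases hx : C x
      · exact ⟨y, x, by simpa [hx] using hne.symm, hx⟩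
      · exact ⟨x, y, hx, by simpa [hx] using hne.symm⟩
    obtain ⟨w, hw, hsum⟩ := exists_injective_sum_eq_sum_compl (s := {v | C v}) h3 hnk hkn hS
      ⟨a, by simpa using ha⟩ ⟨b, by simpa using hb⟩
    refine ⟨w, hw, hG.mem_range_wdegHom_of_coloring C ?_⟩
    rwa [compl_filter] at hsum
  · simp only [two_colorable_iff_forall_loop_even, not_forall, Nat.not_even_iff_odd] at hC
    obtain ⟨u, c, hc⟩ := hC
    let e := Fintype.equivFin V
    refine ⟨fun v => ((e v : ℕ) : ZMod k), fun u v h => e.injective (Fin.ext ?_),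
      hG.mem_range_wdegHom_of_odd_loop c hc ?_⟩
    · exact CharP.natCast_injOn_Iio (ZMod k) k ((e u).isLt.trans_le hnk)
        ((e v).isLt.trans_le hnk) h
    · rwa [Equiv.sum_comp e (fun i => ((i : ℕ) : ZMod k)), Fin.sum_univ_eq_sum_range,
        ← Nat.cast_sum]

theorem IsIrregular.card_mod_four_ne_two {f : Sym2 V → ZMod (Fintype.card V)}
    (hf : G.IsIrregular f) : Fintype.card V % 4 ≠ 2 := by
  intro h2
  have : NeZero (Fintype.card V) := ⟨by omega⟩
  have hbij : Function.Bijective (G.wdeg f) :=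
    (Fintype.bijective_iff_injective_and_card _).2 ⟨hf, (ZMod.card _).symm⟩
  have hsum : ∑ v, G.wdeg f v = ∑ x : ZMod _, x := Fintype.sum_bijective _ hbij _ _ fun _ => rfl
  have heven := G.even_sum_wdeg f
  rw [hsum, ZMod.sum_univ_eq_natCast_sum_range] at heven
  exact Nat.not_even_iff_odd.2 (odd_sum_range_id_of_mod_four_eq_two h2)
    (ZMod.even_of_even_natCast (by omega) heven)

end SimpleGraph

/-- For a connected simple graph `G` of order `n ≥ 3`, the modular edge-gracefulness
satisfies `k(G) = n` if `n ≢ 2 (mod 4)` and `k(G) = n + 1` if `n ≡ 2 (mod 4)`. -/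
theorem modularEdgeGracefulness_of_connected
    {V : Type} [Fintype V] (G : SimpleGraph V) (hG : G.Connected)
    (n : ℕ) (hn : Fintype.card V = n) (h3 : 3 ≤ n) :
    (n % 4 ≠ 2 → G.modularEdgeGracefulness = n) ∧
    (n % 4 = 2 → G.modularEdgeGracefulness = n + 1) := by
  subst hn
  have hmem : ∀ k, Fintype.card V ≤ k → k ≤ Fintype.card V + 1 →
      Even ((∑ i ∈ range (Fintype.card V), i : ℕ) : ZMod k) →
      k ∈ {k | Fintype.card V ≤ k ∧ ∃ f : Sym2 V → ZMod k, G.IsIrregular f} :=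
    fun k hnk hkn hS => ⟨hnk, hG.exists_isIrregular h3 hnk hkn hS⟩
  refine ⟨fun h4 => IsLeast.csInf_eq ⟨hmem _ le_rfl (by omega) ?_, fun _ hb => hb.1⟩,
    fun h4 => IsLeast.csInf_eq ⟨hmem _ (by omega) le_rfl (ZMod.even_of_odd ?_ _), fun b hb => ?_⟩⟩
  · rcases Nat.even_or_odd (Fintype.card V) with he | ho
    · exact (even_sum_range_id_of_four_dvd (by rw [Nat.even_iff] at he; omega)).natCast
    · exact ZMod.even_of_odd ho _
  · exact Nat.odd_iff.2 (by omega)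
  · obtain ⟨hb, f, hf⟩ := hb
    have : b ≠ Fintype.card V := by
      rintro rfl
      exact hf.card_mod_four_ne_two h4
    omega
end

section
/- Let G be a finite simple graph of order n with n ≡ 2 (mod 4). Then for every Abelian group 𝒢 of order n there is no 𝒢-irregular labeling of G. -/
/-!
The weighted degrees of an irregular labeling by a group `A` with `|A| = |V|` run through every
element of `A` exactly once, so `∑ a : A, a` equals the sum of all weighted degrees, which is
twice the sum of the edge labels. But when `|A| = 2m` with `m` odd, `A` has a unique element `t`
of order 2 (the quotient by `⟨t⟩` has odd order `m`, so it contains no element of order 2), all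
other elements cancel against their negatives, so `∑ a : A, a = t`; and `t = 2x` is impossible,
since then `t = m • t = 2m • x = 0`.
-/

open Finset

namespace SimpleGraph

variable {V : Type} [Fintype V] (G : SimpleGraph V) {A : Type} [AddCommGroup A]

lemma sum_wdeg_eq_sum_dart [DecidableRel G.Adj] (f : Sym2 V → A) :
    ∑ v, G.wdeg f v = ∑ d : G.Dart, f d.edge := by
  let e : (Σ v, G.neighborSet v) ≃ G.Dart :=
    { toFun := fun s => ⟨(s.fst, s.snd), s.snd.property⟩
      invFun := fun d => ⟨d.fst, d.snd, d.adj⟩ }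
  rw [← e.sum_comp, Fintype.sum_sigma]
  refine Fintype.sum_congr _ _ fun v => ?_
  rw [wdeg, Set.toFinite_toFinset, ← sum_set_coe]
  rfl

lemma sum_dart_edge_eq_two_nsmul [DecidableEq V] [DecidableRel G.Adj] (f : Sym2 V → A) :
    ∑ d : G.Dart, f d.edge = 2 • ∑ e ∈ G.edgeFinset, f e := by
  rw [← sum_fiberwise_of_maps_to (g := Dart.edge) (t := G.edgeFinset) (by simp), smul_sum]
  refine sum_congr rfl fun e he => ?_
  rw [sum_congr rfl fun d hd => congrArg f (mem_filter.mp hd).2, sum_const,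
    G.dart_edge_fiber_card e (mem_edgeFinset.mp he)]

lemma sum_wdeg_eq_two_nsmul [DecidableEq V] [DecidableRel G.Adj] (f : Sym2 V → A) :
    ∑ v, G.wdeg f v = 2 • ∑ e ∈ G.edgeFinset, f e :=
  (G.sum_wdeg_eq_sum_dart f).trans (G.sum_dart_edge_eq_two_nsmul f)

variable {G} in
lemma IsIrregular.sum_wdeg_eq_sum_univ [Fintype A] {f : Sym2 V → A} (hf : G.IsIrregular f)
    (hcard : Fintype.card V = Fintype.card A) : ∑ v, G.wdeg f v = ∑ a : A, a :=
  Fintype.sum_bijective _ ((Fintype.bijective_iff_injective_and_card _).mpr ⟨hf, hcard⟩) _ _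
    fun _ => rfl

end SimpleGraph

section TwoTorsion

variable {A : Type} [AddCommGroup A]

lemma eq_of_two_nsmul_eq_zero_of_card_mod_four [Finite A] (hA : Nat.card A % 4 = 2) {a b : A}
    (ha : 2 • a = 0) (ha0 : a ≠ 0) (hb : 2 • b = 0) (hb0 : b ≠ 0) : b = a := by
  set H := AddSubgroup.zmultiples a
  have hindex : H.index % 2 = 1 := by
    have := H.index_mul_card
    rw [Nat.card_zmultiples, addOrderOf_eq_prime ha ha0] at this
    omega
  have hbH : b ∈ H := by
    have hodd : H.index • b = b := by
      rw [← Nat.mod_add_div H.index 2, hindex, add_nsmul, mul_nsmul, hb, nsmul_zero, add_zero,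
        one_nsmul]
    exact hodd ▸ H.nsmul_index_mem b
  obtain ⟨k, rfl⟩ := AddSubgroup.mem_zmultiples_iff.mp hbH
  rw [← mod_addOrderOf_zsmul, addOrderOf_eq_prime ha ha0] at hb0 ⊢
  rcases Int.emod_two_eq k with h | h <;> simp_all

lemma exists_two_torsion_eq_pair_of_card_mod_four [Finite A] (hA : Nat.card A % 4 = 2) :
    ∃ t : A, t ≠ 0 ∧ ∀ a : A, 2 • a = 0 ↔ a = 0 ∨ a = t := by
  obtain ⟨t, ht⟩ := exists_prime_addOrderOf_dvd_card' (G := A) 2 (by omega)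
  have ht2 : 2 • t = 0 := ht ▸ addOrderOf_nsmul_eq_zero t
  have ht0 : t ≠ 0 := by rintro rfl; simp at ht
  refine ⟨t, ht0, fun a => ⟨fun ha => or_iff_not_imp_left.mpr fun ha0 => ?_, ?_⟩⟩
  · exact eq_of_two_nsmul_eq_zero_of_card_mod_four hA ht2 ht0 ha ha0
  · rintro (rfl | rfl) <;> simp [ht2]

lemma sum_univ_eq_sum_two_torsion [Fintype A] [DecidableEq A] :
    ∑ a : A, a = ∑ a with 2 • a = 0, a := by
  rw [← sum_filter_add_sum_filter_not univ (fun a : A => 2 • a = 0), add_eq_left]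
  refine sum_involution (fun a _ => -a) (fun a _ => add_neg_cancel a) ?_ ?_ (fun a _ => neg_neg a)
  · intro a ha _ hneg
    rw [mem_filter, two_nsmul, ← neg_eq_iff_add_eq_zero] at ha
    exact ha.2 hneg
  · intro a ha
    simpa using ha

lemma sum_univ_eq_of_two_torsion_eq_pair [Fintype A] {t : A}
    (ht : ∀ a : A, 2 • a = 0 ↔ a = 0 ∨ a = t) : ∑ a : A, a = t := by
  classical
  have htorsion : ({a | 2 • a = 0} : Finset A) = {0, t} := by
    ext a
    simp [ht]
  rw [sum_univ_eq_sum_two_torsion, htorsion, sum_insert_zero (f := fun a => a) rfl, sum_singleton]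

lemma sum_univ_ne_two_nsmul [Fintype A] (hA : Nat.card A % 4 = 2) (x : A) :
    ∑ a : A, a ≠ 2 • x := by
  obtain ⟨t, ht0, ht⟩ := exists_two_torsion_eq_pair_of_card_mod_four hA
  rw [sum_univ_eq_of_two_torsion_eq_pair ht]
  intro htx
  have hodd : (Nat.card A / 2) • t = t := by
    obtain ⟨k, hk⟩ : ∃ k, Nat.card A / 2 = 2 * k + 1 := ⟨Nat.card A / 4, by omega⟩
    rw [hk, succ_nsmul, mul_nsmul, (ht t).mpr (Or.inr rfl), nsmul_zero, zero_add]
  apply ht0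
  calc t = (Nat.card A / 2) • t := hodd.symm
    _ = Nat.card A • x := by rw [htx, ← mul_nsmul, Nat.mul_div_cancel' (by omega)]
    _ = 0 := card_nsmul_eq_zero'

end TwoTorsion

/-- If `G` is a finite simple graph of order `n` with `n ≡ 2 (mod 4)`, then for every
Abelian group `A` of order `n` there is no `A`-irregular labeling of `G`. -/
theorem no_irregular_labeling_of_card_two_mod_four
    {V : Type} [Fintype V] (G : SimpleGraph V) (n : ℕ)
    (hn : Fintype.card V = n) (h2 : n % 4 = 2)
    (A : Type) [AddCommGroup A] [Fintype A] (hA : Fintype.card A = n) :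
    ¬ ∃ f : Sym2 V → A, G.IsIrregular f := by
  classical
  rintro ⟨f, hf⟩
  have hcard : Nat.card A % 4 = 2 := by rwa [Nat.card_eq_fintype_card, hA]
  apply sum_univ_ne_two_nsmul hcard (∑ e ∈ G.edgeFinset, f e)
  rw [← hf.sum_wdeg_eq_sum_univ (hn.trans hA.symm), G.sum_wdeg_eq_two_nsmul]
end

section
/- Let s = q·r with r ≥ 3, and let 𝒢 be an Abelian group of order s such that the number of involutions in 𝒢 is not equal to one. Then the set 𝒢 can be partitioned into pairwise disjoint subsets A_1, A_2, ..., A_q such that for every 1 ≤ i ≤ q, |A_i| = r and ∑_{a ∈ A_i} a = 0. -/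
/-!
Write `r = d * k` with `d = 4` or `d` odd and `d ≥ 3`, and pick a subgroup `H ≤ A` of index `d`
(containing `2A` when `d = 4`). Since `A ⧸ H` has a complete mapping, its coset representatives
`rep c` can be chosen with zero sum. Given permutations `π c` of `H` whose values `π c i` sum to
zero over `c` for every `i`, the sets `{rep c + π c i | c}`, `i ∈ H`, partition `A` into zero-sum
transversals of `H`; grouping them `k` at a time gives the partition. For `d` even, take
`π c = ± id` in equal numbers; for `d` odd, take `id, φ, -(id + φ)` on three cosets and
`± id` on the others, where `φ` is a complete mapping of `H`. It exists by the abelian case of the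
Hall–Paige theorem, because `H` contains all involutions of `A`.

That case is proved by splitting `G ≃ ZMod (2M) × G'`; if `G'` is odd, `G` has exactly one
involution. When `G'` is even, it carries a bijection `ψ` and a 2-colouring `c` such that
`w ↦ (c w, w + ψ w)` is injective modulo an involution `τ` (an invariant proved by the same
induction). Then `(x, w) ↦ (x + c w, ψ w + ε τ)`, where `ε ∈ {0, 1}` records the half of
`ZMod (2M)` containing `x + c w`, is a complete mapping: the parity of `2x + c w` recovers the
colour, and `ε` separates `x` from `x + M`.
-/

open Finset Function

section CompleteMapping

variable {G H : Type*} [AddCommGroup G] [AddCommGroup H]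

def involutions (G : Type*) [AddCommGroup G] : Set G := {ι | ι ≠ 0 ∧ ι + ι = 0}

def IsCompleteMapping (φ : G → G) : Prop := Bijective φ ∧ Bijective fun x => x + φ x

def HasCompleteMapping (G : Type*) [AddCommGroup G] : Prop := ∃ φ : G → G, IsCompleteMapping φ

theorem HasCompleteMapping.of_addEquiv (e : G ≃+ H) (h : HasCompleteMapping G) :
    HasCompleteMapping H := by
  obtain ⟨φ, hφ, hφ'⟩ := h
  refine ⟨e ∘ φ ∘ e.symm, e.bijective.comp (hφ.comp e.symm.bijective), ?_⟩
  convert e.bijective.comp (hφ'.comp e.symm.bijective) using 1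
  ext x
  simp

theorem HasCompleteMapping.sum_eq_zero [Fintype G] (h : HasCompleteMapping G) :
    ∑ x : G, x = 0 := by
  obtain ⟨φ, hφ, hφ'⟩ := h
  have hsum : ∑ x, (x + φ x) = ∑ x, x := hφ'.sum_comp id
  rw [sum_add_distrib, hφ.sum_comp (fun x => x)] at hsum
  simpa using hsum

theorem eq_zero_of_add_self_eq_zero [Finite G] (hG : Odd (Nat.card G)) {x : G}
    (hx : x + x = 0) : x = 0 :=
  (Nat.coprime_two_right.mpr hG).nsmul_right_bijective.injective <| by simp [two_nsmul, hx]

theorem hasCompleteMapping_of_odd_card [Finite G] (hG : Odd (Nat.card G)) :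
    HasCompleteMapping G :=
  ⟨id, bijective_id, by
    simpa [two_nsmul] using (Nat.coprime_two_right.mpr hG).nsmul_right_bijective⟩

theorem ncard_involutions_congr (e : G ≃+ H) :
    (involutions G).ncard = (involutions H).ncard := by
  refine Set.ncard_congr (fun x _ => e x) (fun x hx => ?_) (fun x y _ _ h => e.injective h)
    (fun y hy => ⟨e.symm y, ?_, by simp⟩)
  · exact ⟨by simpa using hx.1, by rw [← map_add, hx.2, map_zero]⟩
  · exact ⟨by simpa using hy.1, by rw [← map_add, hy.2, map_zero]⟩

end CompleteMapping

section CompleteMappingMod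

variable {G H : Type*} [AddCommGroup G] [AddCommGroup H]

def IsCompleteMappingMod (τ : G) (c : G → Bool) (ψ : G → G) : Prop :=
  Bijective ψ ∧
    ∀ w w', c w = c w' → w + ψ w - (w' + ψ w') ∈ AddSubgroup.zmultiples τ → w = w'

def HasCompleteMappingMod (G : Type*) [AddCommGroup G] : Prop :=
  ∃ τ ∈ involutions G, ∃ c ψ, IsCompleteMappingMod τ c ψ

theorem add_self_eq_zero_of_mem_zmultiples {τ z : G} (hτ : τ + τ = 0)
    (hz : z ∈ AddSubgroup.zmultiples τ) : z + z = 0 := by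
  obtain ⟨n, rfl⟩ := AddSubgroup.mem_zmultiples_iff.mp hz
  rw [← smul_add, hτ, smul_zero]

theorem HasCompleteMappingMod.of_addEquiv (e : G ≃+ H) (h : HasCompleteMappingMod G) :
    HasCompleteMappingMod H := by
  obtain ⟨τ, ⟨hτ, hτ'⟩, c, ψ, hψ, hinj⟩ := h
  refine ⟨e τ, ⟨by simpa using hτ, by rw [← map_add, hτ', map_zero]⟩, c ∘ e.symm,
    e ∘ ψ ∘ e.symm, e.bijective.comp (hψ.comp e.symm.bijective), fun x x' hc hmem => ?_⟩
  obtain ⟨w, rfl⟩ := e.surjective x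
  obtain ⟨w', rfl⟩ := e.surjective x'
  simp only [comp_apply, AddEquiv.symm_apply_apply] at hc hmem
  rw [← map_add, ← map_add, ← map_sub] at hmem
  obtain ⟨n, hn⟩ := AddSubgroup.mem_zmultiples_iff.mp hmem
  rw [hinj w w' hc ⟨n, e.injective (by rw [map_zsmul, hn])⟩]

theorem HasCompleteMappingMod.prod (hG : HasCompleteMappingMod G) (hH : HasCompleteMapping H) :
    HasCompleteMappingMod (G × H) := by
  obtain ⟨τ, ⟨hτ, hτ'⟩, c, ψ, hψ, hinj⟩ := hG
  obtain ⟨θ, hθ, hθ'⟩ := hH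
  refine ⟨(τ, 0), ⟨by simp [hτ], by simp [hτ']⟩, fun p => c p.1, Prod.map ψ θ,
    hψ.prodMap hθ, fun ⟨w, v⟩ ⟨w', v'⟩ hc hmem => ?_⟩
  obtain ⟨n, hn⟩ := AddSubgroup.mem_zmultiples_iff.mp hmem
  simp only [Prod.smul_mk, smul_zero, Prod.map_apply, Prod.mk_add_mk, Prod.mk_sub_mk,
    Prod.mk.injEq] at hn
  refine Prod.ext (hinj w w' hc ⟨n, hn.1⟩) (hθ'.injective ?_)
  exact sub_eq_zero.mp hn.2.symm

end CompleteMappingMod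

namespace ZMod

variable {M : ℕ}

def upperHalf (M : ℕ) (y : ZMod (2 * M)) : Bool := decide (M ≤ y.val)

theorem add_self_ne_one (x : ZMod (2 * M)) : x + x ≠ 1 := by
  intro h
  have h2 := congrArg (castHom (dvd_mul_right 2 M) (ZMod 2)) h
  rw [map_add, map_one] at h2
  generalize castHom (dvd_mul_right 2 M) (ZMod 2) x = y at h2
  fin_cases y <;> simp at h2 <;> exact absurd h2 (by decide)

theorem eq_of_add_self_add_toNat_eq {x y : ZMod (2 * M)} {b b' : Bool}
    (h : x + x + b.toNat = y + y + b'.toNat) : b = b' := by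
  cases b <;> cases b'
  all_goals first
    | rfl
    | simp only [Bool.toNat_true, Bool.toNat_false, Nat.cast_one, Nat.cast_zero] at h
  · exact absurd (by linear_combination h) (add_self_ne_one (x - y))
  · exact absurd (by linear_combination -h) (add_self_ne_one (y - x))

variable [NeZero M]

theorem natCast_mem_involutions : (M : ZMod (2 * M)) ∈ involutions (ZMod (2 * M)) := by
  refine ⟨fun h => ?_, by rw [← Nat.cast_add, ← two_mul, natCast_self]⟩
  have := Nat.le_of_dvd (Nat.pos_of_neZero M) ((natCast_eq_zero_iff _ _).mp h)
  have := NeZero.ne M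
  omega

theorem upperHalf_add_natCast (y : ZMod (2 * M)) : upperHalf M (y + M) = !upperHalf M y := by
  have hM : (M : ZMod (2 * M)).val = M := val_natCast_of_lt (by have := NeZero.ne M; omega)
  have hy := val_lt y
  simp only [upperHalf]
  rcases lt_or_ge (y.val + M) (2 * M) with h | h
  · rw [val_add_of_lt (by omega), hM, ← decide_not]
    exact decide_eq_decide.mpr (by omega)
  · have := val_add_val_of_le (a := y) (b := (M : ZMod (2 * M))) (by omega)
    rw [← decide_not]
    exact decide_eq_decide.mpr (by omega)

theorem eq_or_eq_add_natCast_of_add_self_eq {x y : ZMod (2 * M)} (h : x + x = y + y) :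
    y = x ∨ y = x + M := by
  set z := y - x with hz
  have hzz : ((z.val + z.val : ℕ) : ZMod (2 * M)) = 0 := by
    rw [Nat.cast_add, natCast_zmod_val]; linear_combination -h
  obtain ⟨j, hj⟩ := (natCast_eq_zero_iff _ _).mp hzz
  have hlt := val_lt z
  have hj2 : j < 2 := by nlinarith
  interval_cases j
  · left; rw [← sub_eq_zero, ← hz, ← val_eq_zero]; omega
  · right; rw [← sub_eq_iff_eq_add', ← hz, ← natCast_zmod_val z]; congr 1; omega

theorem eq_of_add_self_eq_of_upperHalf_eq {x y : ZMod (2 * M)} (h : x + x = y + y)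
    (hu : upperHalf M x = upperHalf M y) : x = y := by
  rcases eq_or_eq_add_natCast_of_add_self_eq h with rfl | rfl
  · rfl
  · rw [upperHalf_add_natCast] at hu
    cases upperHalf M x <;> simp at hu

end ZMod

section AdjoinCyclic

open ZMod

theorem bijective_prod_add_map {G X : Type*} [AddGroup X] {ψ : G → G} (f : G → X)
    (hψ : Bijective ψ) : Bijective fun p : X × G => (p.1 + f p.2, ψ p.2) := by
  refine ⟨fun ⟨x, w⟩ ⟨x', w'⟩ h => ?_, fun ⟨y, v⟩ => ?_⟩
  · simp only [Prod.mk.injEq] at h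
    obtain rfl := hψ.injective h.2
    rw [add_right_cancel h.1]
  · obtain ⟨w, rfl⟩ := hψ.surjective v
    exact ⟨(y - f w, w), by simp⟩

variable {G : Type*} [AddCommGroup G] {M : ℕ}

theorem hasCompleteMappingMod_zmod [NeZero M] : HasCompleteMappingMod (ZMod (2 * M)) := by
  refine ⟨M, natCast_mem_involutions, upperHalf M, fun w => -(w + w) + (upperHalf M w).toNat,
    Finite.injective_iff_bijective.mp fun w w' h => ?_, fun w w' hc hmem => ?_⟩
  · have hc := eq_of_add_self_add_toNat_eq (x := w') (y := w) (b := upperHalf M w)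
      (b' := upperHalf M w') (by linear_combination h)
    simp only [hc, add_left_inj, neg_inj] at h
    exact eq_of_add_self_eq_of_upperHalf_eq h hc
  · have h := add_self_eq_zero_of_mem_zmultiples natCast_mem_involutions.2 hmem
    simp only [hc] at h
    exact eq_of_add_self_eq_of_upperHalf_eq (by linear_combination -h) hc

variable {τ : G} {c : G → Bool} {ψ : G → G}

theorem IsCompleteMappingMod.eq_of_add_add_toNat_eq (h : IsCompleteMappingMod τ c ψ)
    {x x' : ZMod (2 * M)} {w w' : G} (h₁ : x + x + (c w).toNat = x' + x' + (c w').toNat)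
    (h₂ : w + ψ w - (w' + ψ w') ∈ AddSubgroup.zmultiples τ) :
    w = w' ∧ x + x = x' + x' := by
  obtain rfl := h.2 w w' (eq_of_add_self_add_toNat_eq h₁) h₂
  exact ⟨rfl, add_right_cancel h₁⟩

variable [NeZero M]

theorem HasCompleteMappingMod.zmod_prod (hG : HasCompleteMappingMod G) :
    HasCompleteMappingMod (ZMod (2 * M) × G) := by
  obtain ⟨τ, ⟨hτ, hτ'⟩, c, ψ, hψ⟩ := hG
  refine ⟨(0, τ), ⟨by simp [hτ], by simp [hτ']⟩, fun p => upperHalf M p.1,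
    fun p => (p.1 + (c p.2).toNat, ψ p.2),
    bijective_prod_add_map (fun w => ((c w).toNat : ZMod (2 * M))) hψ.1,
    fun ⟨x, w⟩ ⟨x', w'⟩ hc hmem => ?_⟩
  obtain ⟨n, hn⟩ := AddSubgroup.mem_zmultiples_iff.mp hmem
  simp only [Prod.smul_mk, smul_zero, Prod.mk_add_mk, Prod.mk_sub_mk, Prod.mk.injEq] at hn
  obtain ⟨rfl, hx⟩ := hψ.eq_of_add_add_toNat_eq (x := x) (x' := x')
    (by linear_combination -hn.1) ⟨n, hn.2⟩
  rw [eq_of_add_self_eq_of_upperHalf_eq hx hc]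

theorem HasCompleteMappingMod.hasCompleteMapping_zmod_prod [Finite G]
    (hG : HasCompleteMappingMod G) : HasCompleteMapping (ZMod (2 * M) × G) := by
  obtain ⟨τ, ⟨hτ, hτ'⟩, c, ψ, hψ⟩ := hG
  set t : ZMod (2 * M) → G := fun y => if upperHalf M y then τ else 0
  have ht : ∀ y, t y ∈ AddSubgroup.zmultiples τ := fun y => by
    by_cases h : upperHalf M y <;> simp [t, h, AddSubgroup.mem_zmultiples]
  have hflip : Involutive fun p : ZMod (2 * M) × G => (p.1, p.2 + t p.1) := fun p => by
    simp [add_assoc, add_self_eq_zero_of_mem_zmultiples hτ' (ht _)]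
  refine ⟨fun p => (p.1 + (c p.2).toNat, ψ p.2 + t (p.1 + (c p.2).toNat)),
    hflip.bijective.comp
      (bijective_prod_add_map (fun w => ((c w).toNat : ZMod (2 * M))) hψ.1),
    Finite.injective_iff_bijective.mp fun ⟨x, w⟩ ⟨x', w'⟩ h => ?_⟩
  simp only [Prod.mk_add_mk, Prod.mk.injEq] at h
  obtain ⟨h₁, h₂⟩ := h
  have hmem : w + ψ w - (w' + ψ w') ∈ AddSubgroup.zmultiples τ := by
    rw [show w + ψ w - (w' + ψ w') = t (x' + (c w').toNat) - t (x + (c w).toNat) by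
      rw [sub_eq_sub_iff_add_eq_add]; convert h₂ using 1 <;> abel]
    exact sub_mem (ht _) (ht _)
  obtain ⟨rfl, hx⟩ := hψ.eq_of_add_add_toNat_eq (x := x) (x' := x')
    (by linear_combination h₁) hmem
  have hu : upperHalf M (x + (c w).toNat) = upperHalf M (x' + (c w).toNat) := by
    have h₃ := add_left_cancel (add_left_cancel h₂)
    cases h : upperHalf M (x + (c w).toNat) <;> cases h' : upperHalf M (x' + (c w).toNat) <;>
      simp only [t, h, h', Bool.false_eq_true, ↓reduceIte] at h₃
    exacts [rfl, absurd h₃.symm hτ, absurd h₃ hτ, rfl]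
  have := eq_of_add_self_eq_of_upperHalf_eq (by linear_combination hx) hu
  rw [add_right_cancel this]

end AdjoinCyclic

section HallPaige

theorem exists_addEquiv_zmod_prod_of_even (G : Type) [AddCommGroup G] [Finite G]
    (hG : Even (Nat.card G)) : ∃ (M : ℕ) (_ : NeZero M) (G' : Type) (_ : AddCommGroup G')
      (_ : Finite G'), Nonempty (G ≃+ ZMod (2 * M) × G') := by
  classical
  obtain ⟨ι, _, p, hp, e, ⟨f⟩⟩ := AddCommGroup.equiv_directSum_zmod_of_finite G
  have _ : ∀ i, NeZero (p i ^ e i) := fun i => ⟨(pow_pos (hp i).pos _).ne'⟩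
  let f' : G ≃+ ∀ i, ZMod (p i ^ e i) := f.trans (DirectSum.addEquivProd _)
  obtain ⟨i₀, hi₀⟩ : ∃ i, Even (p i ^ e i) := by
    by_contra! h
    rw [Nat.card_congr f'.toEquiv, Nat.card_pi, ← Nat.not_odd_iff_even] at hG
    exact hG (Finset.prod_induction _ Odd (fun _ _ => Odd.mul) odd_one fun i _ => by
      simpa [Nat.card_zmod] using h i)
  obtain ⟨M, hM⟩ := hi₀
  have : NeZero M := ⟨fun h => NeZero.ne (p i₀ ^ e i₀) (by omega)⟩
  let split : (∀ i, ZMod (p i ^ e i)) ≃+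
      ZMod (p i₀ ^ e i₀) × ∀ j : {j // j ≠ i₀}, ZMod (p j ^ e j) :=
    { Equiv.piSplitAt i₀ _ with map_add' := fun _ _ => rfl }
  exact ⟨M, inferInstance, _, inferInstance, inferInstance, ⟨f'.trans (split.trans
    (AddEquiv.prodCongr (ZMod.ringEquivCongr (by omega)).toAddEquiv (AddEquiv.refl _)))⟩⟩

theorem hasCompleteMappingMod_of_even (G : Type) [AddCommGroup G] [Finite G]
    (hG : Even (Nat.card G)) : HasCompleteMappingMod G := by
  induction h : Nat.card G using Nat.strong_induction_on generalizing G with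
  | _ n ih =>
  obtain ⟨M, _, G', _, _, ⟨e⟩⟩ := exists_addEquiv_zmod_prod_of_even G hG
  have hcard : Nat.card G = 2 * M * Nat.card G' := by
    rw [Nat.card_congr e.toEquiv, Nat.card_prod, Nat.card_zmod]
  refine HasCompleteMappingMod.of_addEquiv e.symm ?_
  rcases Nat.even_or_odd (Nat.card G') with hG' | hG'
  · have hlt : Nat.card G' < n := by
      have := Nat.card_pos (α := G'); have := Nat.pos_of_neZero M; nlinarith
    exact (ih _ hlt G' hG' rfl).zmod_prod
  · exact hasCompleteMappingMod_zmod.prod (hasCompleteMapping_of_odd_card hG')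

theorem ncard_involutions_zmod_prod_of_odd {M : ℕ} [NeZero M] {G : Type*} [AddCommGroup G]
    [Finite G] (hG : Odd (Nat.card G)) : (involutions (ZMod (2 * M) × G)).ncard = 1 := by
  refine Set.ncard_eq_one.mpr ⟨((M : ZMod (2 * M)), 0), Set.ext fun ⟨x, y⟩ => ⟨?_, ?_⟩⟩
  · rintro ⟨hne, hxy⟩
    simp only [Prod.mk_add_mk, Prod.mk_eq_zero] at hxy
    obtain rfl := eq_zero_of_add_self_eq_zero hG hxy.2
    rcases ZMod.eq_or_eq_add_natCast_of_add_self_eq (x := 0) (y := x)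
      (by simpa using hxy.1.symm) with rfl | rfl
    · exact absurd rfl hne
    · simp
  · rintro ⟨⟩
    exact ⟨by simpa using ZMod.natCast_mem_involutions.1,
      by simp [ZMod.natCast_mem_involutions.2]⟩

theorem hasCompleteMapping_of_ncard_involutions_ne_one (G : Type) [AddCommGroup G] [Finite G]
    (h : (involutions G).ncard ≠ 1) : HasCompleteMapping G := by
  rcases Nat.even_or_odd (Nat.card G) with hG | hG
  · obtain ⟨M, _, G', _, _, ⟨e⟩⟩ := exists_addEquiv_zmod_prod_of_even G hG
    refine HasCompleteMapping.of_addEquiv e.symm ?_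
    rcases Nat.even_or_odd (Nat.card G') with hG' | hG'
    · exact (hasCompleteMappingMod_of_even G' hG').hasCompleteMapping_zmod_prod
    · exact absurd
        ((ncard_involutions_congr e).trans (ncard_involutions_zmod_prod_of_odd hG')) h
  · exact hasCompleteMapping_of_odd_card hG

end HallPaige

section Subgroups

variable {A : Type*} [AddCommGroup A] [Finite A]

theorem exists_addSubgroup_card_eq {d : ℕ} (hd : d ∣ Nat.card A) :
    ∃ H : AddSubgroup A, Nat.card H = d := by
  induction d using Nat.strong_induction_on generalizing A with
  | _ d ih =>
  rcases eq_or_ne d 1 with rfl | hd1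
  · exact ⟨⊥, by simp⟩
  have hd0 : d ≠ 0 := by rintro rfl; exact Nat.card_pos.ne' (Nat.eq_zero_of_zero_dvd hd)
  have hp := Nat.minFac_prime hd1
  have : Fact d.minFac.Prime := ⟨hp⟩
  obtain ⟨x, hx⟩ := exists_prime_addOrderOf_dvd_card' d.minFac ((Nat.minFac_dvd d).trans hd)
  set N := AddSubgroup.zmultiples x
  have hA : Nat.card A = Nat.card (A ⧸ N) * d.minFac := by
    rw [← hx, ← Nat.card_zmultiples]; exact N.card_eq_card_quotient_mul_card_addSubgroup
  have hdvd : d / d.minFac ∣ Nat.card (A ⧸ N) := by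
    obtain ⟨m, hm⟩ := hd
    refine ⟨m, Nat.eq_of_mul_eq_mul_right hp.pos ?_⟩
    rw [← hA, hm, mul_right_comm, Nat.div_mul_cancel (Nat.minFac_dvd d)]
  obtain ⟨S, hS⟩ := ih _ (Nat.div_lt_self (by omega) hp.one_lt) hdvd
  refine ⟨S.comap (QuotientAddGroup.mk' N), Nat.eq_of_mul_eq_mul_right
    (Nat.pos_of_ne_zero (AddSubgroup.index_ne_zero_of_finite (H := S))) ?_⟩
  have h := (S.comap (QuotientAddGroup.mk' N)).card_mul_index
  rw [AddSubgroup.index_comap_of_surjective _ (QuotientAddGroup.mk'_surjective N)] at h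
  rw [h, hA, ← S.card_mul_index, hS, mul_right_comm, Nat.div_mul_cancel (Nat.minFac_dvd d)]

theorem exists_addSubgroup_index_eq {d : ℕ} (hd : d ∣ Nat.card A) :
    ∃ H : AddSubgroup A, H.index = d := by
  obtain ⟨H, hH⟩ := exists_addSubgroup_card_eq (Nat.div_dvd_of_dvd hd)
  refine ⟨H, Nat.eq_of_mul_eq_mul_left (Nat.div_pos (Nat.le_of_dvd Nat.card_pos hd)
    (Nat.pos_of_dvd_of_pos hd Nat.card_pos)) ?_⟩
  rw [← hH, H.card_mul_index, hH, Nat.div_mul_cancel hd]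

theorem four_dvd_card_of_add_self_eq_zero {K : Type*} [AddCommGroup K] [Finite K]
    (h : ∀ x : K, x + x = 0) (h3 : 3 ≤ Nat.card K) : 4 ∣ Nat.card K := by
  have hpow := Nat.eq_prime_pow_of_unique_prime_dvd (Nat.card_pos (α := K)).ne'
    fun {p} hp hpK => by
    have : Fact p.Prime := ⟨hp⟩
    obtain ⟨x, hx⟩ := exists_prime_addOrderOf_dvd_card' p hpK
    have h2 : addOrderOf x ∣ 2 := addOrderOf_dvd_of_nsmul_eq_zero (by rw [two_nsmul, h])
    exact (Nat.prime_dvd_prime_iff_eq hp Nat.prime_two).mp (hx ▸ h2)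
  rw [hpow] at h3 ⊢
  refine (pow_dvd_pow 2 (?_ : 2 ≤ _))
  by_contra! hlt
  interval_cases (Nat.card K).primeFactorsList.length <;> simp at h3

theorem AddMonoidHom.index_range_eq_card_ker (f : A →+ A) : f.range.index = Nat.card f.ker := by
  have h := f.ker.card_mul_index
  rw [AddSubgroup.index_ker, ← f.range.card_mul_index] at h
  exact Nat.eq_of_mul_eq_mul_left Nat.card_pos (h.symm.trans (mul_comm _ _))

theorem three_le_card_ker_nsmul_two (hA : Even (Nat.card A)) (hinv : (involutions A).ncard ≠ 1) :
    3 ≤ Nat.card (nsmulAddMonoidHom (α := A) 2).ker := by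
  obtain ⟨ι, hι⟩ := exists_prime_addOrderOf_dvd_card' (hp := ⟨Nat.prime_two⟩) 2
    (even_iff_two_dvd.mp hA)
  have hιinv : ι ∈ involutions A :=
    ⟨by rintro rfl; simp at hι, by rw [← two_nsmul, ← hι, addOrderOf_nsmul_eq_zero]⟩
  obtain ⟨ι₁, ι₂, h₁, h₂, h₁₂⟩ :=
    (Set.one_lt_ncard_iff (s := involutions A) (Set.toFinite _)).mp <| by
      have := (Set.ncard_pos (Set.toFinite _)).mpr ⟨ι, hιinv⟩
      omega
  rw [← SetLike.coe_sort_coe, Nat.card_coe_set_eq,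
    ← Set.ncard_eq_three.mpr ⟨0, ι₁, ι₂, h₁.1.symm, h₂.1.symm, h₁₂, rfl⟩]
  refine Set.ncard_le_ncard (fun x hx => ?_) (Set.toFinite _)
  rcases hx with rfl | rfl | rfl
  exacts [AddSubgroup.zero_mem _, by simp [two_nsmul, h₁.2], by simp [two_nsmul, h₂.2]]

theorem exists_addSubgroup_index_eq_four (hA : Even (Nat.card A))
    (hinv : (involutions A).ncard ≠ 1) :
    ∃ H : AddSubgroup A, H.index = 4 ∧ ∀ a, a + a ∈ H := by
  set dbl := nsmulAddMonoidHom (α := A) 2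
  have hK : ∀ x : dbl.ker, x + x = 0 := fun x =>
    Subtype.ext (by simpa [dbl, two_nsmul] using AddMonoidHom.mem_ker.mp x.2)
  obtain ⟨S, hS⟩ := exists_addSubgroup_index_eq (A := A ⧸ dbl.range) (d := 4) <| by
    rw [show Nat.card (A ⧸ dbl.range) = dbl.range.index from rfl, dbl.index_range_eq_card_ker]
    exact four_dvd_card_of_add_self_eq_zero hK (three_le_card_ker_nsmul_two hA hinv)
  refine ⟨S.comap (QuotientAddGroup.mk' dbl.range), ?_, fun a => ?_⟩
  · rw [AddSubgroup.index_comap_of_surjective _ (QuotientAddGroup.mk'_surjective _), hS]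
  · rw [AddSubgroup.mem_comap, QuotientAddGroup.mk'_apply, (QuotientAddGroup.eq_zero_iff _).mpr
      (AddMonoidHom.mem_range.mpr ⟨a, by simp [dbl, two_nsmul]⟩)]
    exact S.zero_mem

theorem ncard_involutions_of_add_self_eq_zero {G : Type*} [AddCommGroup G] [Finite G]
    (h : ∀ x : G, x + x = 0) : (involutions G).ncard = Nat.card G - 1 := by
  have : involutions G = {0}ᶜ := Set.ext fun x => by simp [involutions, h]
  rw [this, Set.ncard_compl, Set.ncard_singleton]

theorem ncard_involutions_addSubgroup_of_odd_index {H : AddSubgroup A} (hH : Odd H.index) :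
    (involutions H).ncard = (involutions A).ncard := by
  rw [← Set.ncard_image_of_injective _ Subtype.val_injective]
  congr 1
  ext a
  refine ⟨?_, fun ⟨ha, ha'⟩ => ?_⟩
  · rintro ⟨x, ⟨hx, hx'⟩, rfl⟩
    exact ⟨fun h => hx (Subtype.ext h), congrArg Subtype.val hx'⟩
  · have haH : a ∈ H := (QuotientAddGroup.eq_zero_iff a).mp <|
      eq_zero_of_add_self_eq_zero hH
        (by rw [← QuotientAddGroup.mk_add, ha', QuotientAddGroup.mk_zero])
    exact ⟨⟨a, haH⟩, ⟨fun h => ha (congrArg Subtype.val h), Subtype.ext ha'⟩, rfl⟩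

end Subgroups

section PermFamilies

variable {Q V : Type*} [AddCommGroup V]

theorem exists_perm_sum_eq_zero_of_even {s : Finset Q} (hs : Even #s) :
    ∃ π : Q → Equiv.Perm V, ∀ v, ∑ c ∈ s, π c v = 0 := by
  classical
  obtain ⟨m, hm⟩ := hs
  obtain ⟨F, hFs, hF⟩ := exists_subset_card_eq (s := s) (n := m) (by omega)
  set ρ : Q → Equiv.Perm V := fun c => if c ∈ F then Equiv.refl V else Equiv.neg V
  refine ⟨ρ, fun v => ?_⟩
  have hneg : ∑ c ∈ s \ F, ρ c v = ∑ c ∈ s \ F, -v :=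
    sum_congr rfl fun c hc => by simp [ρ, (mem_sdiff.mp hc).2]
  have hpos : ∑ c ∈ F, ρ c v = ∑ c ∈ F, v := sum_congr rfl fun c hc => by simp [ρ, hc]
  rw [← sum_sdiff hFs, hneg, hpos]
  simp [card_sdiff_of_subset hFs, hF, hm]

theorem exists_perm_sum_eq_zero_of_odd [Fintype Q] (hV : HasCompleteMapping V)
    (hQ : Odd (Fintype.card Q)) (h3 : 3 ≤ Fintype.card Q) :
    ∃ π : Q → Equiv.Perm V, ∀ v, ∑ c, π c v = 0 := by
  classical
  obtain ⟨φ, hφ, hφ'⟩ := hV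
  obtain ⟨x, y, z, hxy, hxz, hyz⟩ := Fintype.two_lt_card_iff.mp h3
  set T : Finset Q := {x, y, z}
  have hT3 : #T = 3 := card_eq_three.mpr ⟨x, y, z, hxy, hxz, hyz, rfl⟩
  obtain ⟨π, hπ⟩ := exists_perm_sum_eq_zero_of_even (V := V) (s := Tᶜ) <| by
    rw [card_compl, hT3]
    exact Nat.Odd.sub_odd hQ (by decide)
  set ρ : Q → Equiv.Perm V := fun c => if c = x then Equiv.refl V
    else if c = y then Equiv.ofBijective φ hφ
    else if c = z then (Equiv.ofBijective _ hφ').trans (Equiv.neg V) else π c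
  refine ⟨ρ, fun v => ?_⟩
  have hT : ∑ c ∈ T, ρ c v = 0 := by
    simp [T, ρ, hxy, hxz, hyz, hxy.symm, hxz.symm, hyz.symm]
  have hTc : ∑ c ∈ Tᶜ, ρ c v = ∑ c ∈ Tᶜ, π c v := sum_congr rfl fun c hc => by
    simp only [T, mem_compl, mem_insert, mem_singleton, not_or] at hc
    simp [ρ, hc.1, hc.2.1, hc.2.2]
  rw [← sum_add_sum_compl T, hT, hTc, hπ, add_zero]

end PermFamilies

section Blocks

variable {A : Type*} [AddCommGroup A]

theorem exists_sum_eq_zero_section {H : AddSubgroup A} [Fintype (A ⧸ H)]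
    (hσ : ∑ c : A ⧸ H, c = 0) :
    ∃ rep : A ⧸ H → A, (∀ c, (rep c : A ⧸ H) = c) ∧ ∑ c, rep c = 0 := by
  classical
  set T := ∑ c : A ⧸ H, c.out
  have hT : (T : A ⧸ H) = 0 := by
    rw [← QuotientAddGroup.mk'_apply, map_sum, ← hσ]
    exact sum_congr rfl fun c _ => QuotientAddGroup.out_eq' c
  refine ⟨fun c => c.out - if c = 0 then T else 0, fun c => ?_, ?_⟩
  · dsimp only
    split_ifs with h <;> simp [hT]
  · rw [sum_sub_distrib, sum_ite_eq' univ (0 : A ⧸ H), if_pos (mem_univ _), sub_self]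

theorem bijective_section_add_perm {H : AddSubgroup A} {rep : A ⧸ H → A}
    (hrep : ∀ c, (rep c : A ⧸ H) = c) (π : A ⧸ H → Equiv.Perm H) :
    Bijective fun p : (A ⧸ H) × H => rep p.1 + π p.1 p.2 := by
  have hmk : ∀ c i, ((rep c + π c i : A) : A ⧸ H) = c := fun c i => by
    rw [QuotientAddGroup.mk_add, hrep, (QuotientAddGroup.eq_zero_iff _).mpr (π c i).2, add_zero]
  refine ⟨fun ⟨c, i⟩ ⟨c', i'⟩ h => ?_, fun a => ?_⟩
  · obtain rfl : c = c' := (hmk c i).symm.trans ((congrArg _ h).trans (hmk c' i'))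
    simp only at h
    rw [(π c).injective (Subtype.ext (add_left_cancel h))]
  · have ha : a - rep a ∈ H := (QuotientAddGroup.eq_zero_iff _).mp (by simp [hrep])
    exact ⟨(a, (π a).symm ⟨_, ha⟩), by simp⟩

theorem exists_partition_of_equiv {ι T : Type*} [Fintype ι] [Fintype T] [Fintype A]
    [DecidableEq A] (e : ι × T ≃ A) :
    ∃ P : ι → Finset A, (∀ i j, i ≠ j → Disjoint (P i) (P j)) ∧
      univ.biUnion P = univ ∧
      ∀ i, #(P i) = Fintype.card T ∧ ∑ a ∈ P i, a = ∑ t, e (i, t) := by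
  refine ⟨fun i => univ.map ⟨fun t => e (i, t), fun _ _ h => (Prod.mk.inj (e.injective h)).2⟩,
    fun i j hij => disjoint_left.mpr ?_, eq_univ_of_forall fun a => ?_, fun i => ?_⟩
  · simp only [mem_map, mem_univ, true_and, not_exists, forall_exists_index]
    rintro _ t rfl t' h
    exact hij (congrArg Prod.fst (e.injective h)).symm
  · exact mem_biUnion.mpr ⟨(e.symm a).1, mem_univ _,
      mem_map.mpr ⟨(e.symm a).2, mem_univ _, e.apply_symm_apply a⟩⟩
  · rw [card_map, card_univ, sum_map]
    exact ⟨rfl, rfl⟩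

end Blocks

def HasZeroSumPartition (A : Type*) [AddCommGroup A] [Fintype A] [DecidableEq A] (q r : ℕ) :
    Prop :=
  ∃ P : Fin q → Finset A, (∀ i j, i ≠ j → Disjoint (P i) (P j)) ∧
    univ.biUnion P = univ ∧
    ∀ i, #(P i) = r ∧ ∑ a ∈ P i, a = 0

section ZeroSumPartition

variable {A : Type} [AddCommGroup A] [Fintype A] [DecidableEq A]

theorem HasZeroSumPartition.of_quotient {q k : ℕ} (H : AddSubgroup A) [Fintype (A ⧸ H)]
    (hQ : HasCompleteMapping (A ⧸ H)) {π : A ⧸ H → Equiv.Perm H}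
    (hπ : ∀ i, ∑ c, π c i = 0)
    (hA : Fintype.card A = q * (H.index * k)) : HasZeroSumPartition A q (H.index * k) := by
  obtain ⟨rep, hrep, hsum⟩ := exists_sum_eq_zero_section hQ.sum_eq_zero
  have hH : Nat.card H = q * k := Nat.eq_of_mul_eq_mul_right
    (Nat.pos_of_ne_zero AddSubgroup.index_ne_zero_of_finite)
    (by rw [H.card_mul_index, Nat.card_eq_fintype_card, hA]; ring)
  let e := Equiv.ofBijective _ (bijective_section_add_perm hrep π)
  have hcol : ∀ i, ∑ c, e (c, i) = 0 := fun i => by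
    simp only [e, Equiv.ofBijective_apply]
    rw [sum_add_distrib, hsum, ← AddSubgroup.val_finsetSum, hπ, zero_add, ZeroMemClass.coe_zero]
  let ε : H ≃ Fin q × Fin k := (Finite.equivFinOfCardEq hH).trans finProdFinEquiv.symm
  obtain ⟨P, hdisj, hcov, hP⟩ := exists_partition_of_equiv <| (Equiv.prodAssoc _ _ _).symm.trans
    ((Equiv.prodCongr ε.symm (Equiv.refl (A ⧸ H))).trans ((Equiv.prodComm _ _).trans e))
  refine ⟨P, hdisj, hcov, fun j => ⟨?_, ?_⟩⟩
  · rw [(hP j).1, Fintype.card_prod, Fintype.card_fin, ← Nat.card_eq_fintype_card, mul_comm]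
    rfl
  · rw [(hP j).2, Fintype.sum_prod_type]
    exact sum_eq_zero fun l _ => hcol (ε.symm (j, l))

theorem hasZeroSumPartition_of_odd {q k d : ℕ} (hinv : (involutions A).ncard ≠ 1)
    (hA : Fintype.card A = q * (d * k)) (hd : Odd d) (h3 : 3 ≤ d) :
    HasZeroSumPartition A q (d * k) := by
  classical
  obtain ⟨H, rfl⟩ := exists_addSubgroup_index_eq (A := A) (d := d)
    ⟨q * k, by rw [Nat.card_eq_fintype_card, hA]; ring⟩
  have hQ : Fintype.card (A ⧸ H) = H.index := (Nat.card_eq_fintype_card).symm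
  obtain ⟨π, hπ⟩ := exists_perm_sum_eq_zero_of_odd
    (hasCompleteMapping_of_ncard_involutions_ne_one H
      (by rwa [ncard_involutions_addSubgroup_of_odd_index hd]))
    (hQ ▸ hd) (hQ ▸ h3)
  exact HasZeroSumPartition.of_quotient H (hasCompleteMapping_of_odd_card hd) hπ hA

theorem hasZeroSumPartition_four {q k : ℕ} (hinv : (involutions A).ncard ≠ 1)
    (hA : Fintype.card A = q * (4 * k)) : HasZeroSumPartition A q (4 * k) := by
  classical
  obtain ⟨H, hH, hH2⟩ := exists_addSubgroup_index_eq_four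
    ⟨2 * q * k, by rw [Nat.card_eq_fintype_card, hA]; ring⟩ hinv
  have hQ2 : ∀ c : A ⧸ H, c + c = 0 := fun c => by
    induction c using QuotientAddGroup.induction_on with
    | H a => exact (QuotientAddGroup.eq_zero_iff _).mpr (hH2 a)
  have hQ : HasCompleteMapping (A ⧸ H) := hasCompleteMapping_of_ncard_involutions_ne_one _ <| by
    rw [ncard_involutions_of_add_self_eq_zero hQ2, ← AddSubgroup.index, hH]
    decide
  have hQ4 : Even #(univ : Finset (A ⧸ H)) := by
    rw [card_univ, ← Nat.card_eq_fintype_card, ← AddSubgroup.index, hH]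
    decide
  obtain ⟨π, hπ⟩ := exists_perm_sum_eq_zero_of_even (V := H) hQ4
  rw [← hH] at hA ⊢
  exact HasZeroSumPartition.of_quotient H hQ hπ hA

end ZeroSumPartition

theorem exists_eq_mul_and_eq_four_or_odd {r : ℕ} (hr : 3 ≤ r) :
    ∃ d k, r = d * k ∧ (d = 4 ∨ Odd d ∧ 3 ≤ d) := by
  by_cases h4 : 4 ∣ r
  · obtain ⟨k, rfl⟩ := h4
    exact ⟨4, k, rfl, .inl rfl⟩
  rcases Nat.even_or_odd r with ⟨m, rfl⟩ | hr'
  · exact ⟨m, 2, by ring, .inr ⟨Nat.odd_iff.mpr (by omega), by omega⟩⟩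
  · exact ⟨r, 1, (mul_one r).symm, .inr ⟨hr', hr⟩⟩

/-- Let `s = q * r` with `r ≥ 3`, and let `A` be an Abelian group of order `s` whose
number of involutions is not one. Then `A` can be partitioned into `q` pairwise
disjoint subsets, each of size `r` and each summing to zero. -/
theorem zero_sum_partition_of_involutions_ne_one
    (q r s : ℕ) (hr : 3 ≤ r) (hs : s = q * r)
    (A : Type) [AddCommGroup A] [Fintype A] [DecidableEq A]
    (hA : Fintype.card A = s)
    (hinv : {ι : A | ι ≠ 0 ∧ ι + ι = 0}.ncard ≠ 1) :
    ∃ P : Fin q → Finset A,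
      (∀ i j, i ≠ j → Disjoint (P i) (P j)) ∧
      Finset.univ.biUnion P = Finset.univ ∧
      ∀ i, (P i).card = r ∧ ∑ a ∈ P i, a = 0 := by
  subst hs
  obtain ⟨d, k, rfl, rfl | ⟨hd, h3⟩⟩ := exists_eq_mul_and_eq_four_or_odd hr
  · exact hasZeroSumPartition_four hinv hA
  · exact hasZeroSumPartition_of_odd hinv hA hd h3
end
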